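/- A minimal strongly connected digraph of order n ≥ 2 has exactly 2(n−1) arcs if and only if it is a directed tree (the digraph obtained from a tree on n vertices by replacing each edge {u,v} with the two arcs (u,v) and (v,u)). -/

import Mathlib

/-!
By minimality, a strongly connected spanning subdigraph of an MSC digraph is the whole digraph.
So for any root `x`, the arcs are exhausted by an out-branching and an in-branching at `x`,
each with at most `n - 1` arcs. If `(u, w)` is an arc but `(w, u)` is not, let `x` be the vertex
entered right after the last visit of `w` on a walk from `w` to `u`. Then `x ∉ {u, w}`, and both
branchings at `x` can be taken through `(u, w)`: the out-branching along `x ⇝ u → w` (the walk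
avoids `w`), the in-branching along `u → w → x`. Hence `|A| ≤ 2n - 3`, so `|A| = 2(n - 1)` forces
the arcs to be symmetric. In a symmetric MSC digraph every edge of the underlying graph is a
bridge, since a detour around it would make the arc redundant; with strong connectivity the
underlying graph is a tree. Conversely a directed tree has two arcs per edge, i.e. `2(n - 1)`.
-/

/-- Reachability in a digraph given by its arc set `A`. -/
def Reach {α : Type*} (A : Finset (α × α)) (u v : α) : Prop :=
  Relation.ReflTransGen (fun a b => (a, b) ∈ A) u v

/-- A digraph with vertex set `V` and arc set `A` is strongly connected if
every vertex reaches every other vertex by a directed path. -/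
def StrongConn {α : Type*} (V : Finset α) (A : Finset (α × α)) : Prop :=
  ∀ u ∈ V, ∀ v ∈ V, Reach A u v

/-- Minimal strongly connected: strongly connected and removing any arc
destroys strong connectivity. -/
def MSC {α : Type*} [DecidableEq α] (V : Finset α) (A : Finset (α × α)) : Prop :=
  StrongConn V A ∧ ∀ a ∈ A, ¬ StrongConn V (A.erase a)

/-- `l` is a directed (simple) path from `u` to `v` in the digraph with arc set `A`. -/
def IsPath {α : Type*} (A : Finset (α × α)) (u v : α) (l : List α) : Prop :=
  l.Chain' (fun a b => (a, b) ∈ A) ∧ l.head? = some u ∧ l.getLast? = some v ∧ l.Nodup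

/-- `(u,v)` is a transitive arc: it is an arc and there is a directed path from
`u` to `v` distinct from the single arc `(u,v)`. -/
def TransArc {α : Type*} (A : Finset (α × α)) (u v : α) : Prop :=
  (u, v) ∈ A ∧ ∃ l, IsPath A u v l ∧ l ≠ [u, v]

/-- `l` (a list of distinct vertices, of length ≥ 2) is a directed cycle:
consecutive vertices are joined by arcs, and there is an arc from the last
vertex back to the first. -/
def IsCycle {α : Type*} (A : Finset (α × α)) (l : List α) : Prop :=
  ∃ h : l ≠ [], l.Nodup ∧ 2 ≤ l.length ∧
    List.Chain (fun a b => (a, b) ∈ A) (l.getLast h) l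

/-- Well-formedness: nonempty vertex set, arcs join vertices of `V`, no loops. -/
def GoodDigraph {α : Type*} (V : Finset α) (A : Finset (α × α)) : Prop :=
  V.Nonempty ∧ ∀ a ∈ A, a.1 ∈ V ∧ a.2 ∈ V ∧ a.1 ≠ a.2

/-- Outdegree of a vertex. -/
def outdeg {α : Type*} [DecidableEq α] (A : Finset (α × α)) (v : α) : ℕ :=
  (A.filter (fun a => a.1 = v)).card

/-- Indegree of a vertex. -/
def indeg {α : Type*} [DecidableEq α] (A : Finset (α × α)) (v : α) : ℕ :=
  (A.filter (fun a => a.2 = v)).card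

/-- A linear vertex has indegree and outdegree equal to 1. -/
def LinearVertex {α : Type*} [DecidableEq α] (A : Finset (α × α)) (v : α) : Prop :=
  indeg A v = 1 ∧ outdeg A v = 1

/-- The digraph is a directed `n`-cycle: its vertices can be listed
`v₁, …, vₙ` so that the arcs are exactly `(v₁,v₂), …, (vₙ,v₁)`. -/
def IsCycleDigraph {α : Type*} [DecidableEq α] (V : Finset α) (A : Finset (α × α)) : Prop :=
  ∃ l : List α, l.Nodup ∧ 2 ≤ l.length ∧ l.toFinset = V ∧ A = (l.zip (l.rotate 1)).toFinset

/-- A directed tree: every arc is accompanied by its reverse, and the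
underlying undirected graph (on the vertex set `V`) is a tree. -/
def IsDirTree {α : Type*} [DecidableEq α] (V : Finset α) (A : Finset (α × α)) : Prop :=
  (∀ u v : α, (u, v) ∈ A → (v, u) ∈ A) ∧
  (SimpleGraph.fromRel (fun a b : {x // x ∈ V} => ((a : α), (b : α)) ∈ A)).IsTree

/-- `(V', A')` is the (internal or external) expansion of `(V, A)` by the new
vertex `v`.  Internal: an arc `(u,w)` is replaced by `(u,v)` and `(v,w)`.
External: the arcs `(u,v)` and `(v,w)` are added for vertices `u, w ∈ V`. -/
def IsExpansionBy {α : Type*} [DecidableEq α] (v : α) (V : Finset α) (A : Finset (α × α))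
    (V' : Finset α) (A' : Finset (α × α)) : Prop :=
  v ∉ V ∧ V' = insert v V ∧
    ((∃ u w, (u, w) ∈ A ∧ A' = insert (u, v) (insert (v, w) (A.erase (u, w)))) ∨
     (∃ u ∈ V, ∃ w ∈ V, A' = insert (u, v) (insert (v, w) A)))


section Development

variable {α : Type*}

namespace Reach

variable {A B : Finset (α × α)} {u v w : α}

theorem mono (h : A ⊆ B) (huv : Reach A u v) : Reach B u v :=
  Relation.ReflTransGen.mono (fun _ _ hab => h hab) _ _ huv

theorem of_forall_arc (h : ∀ a ∈ A, Reach B a.1 a.2) (huv : Reach A u v) : Reach B u v :=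
  Relation.reflTransGen_closed (fun a b hab => h (a, b) hab) _ _ huv

theorem exists_last_exit [DecidableEq α] (hwu : Reach A w u) (hne : w ≠ u) :
    ∃ x, (w, x) ∈ A ∧ Reach (A.filter (·.2 ≠ w)) x u := by
  induction hwu with
  | refl => exact absurd rfl hne
  | @tail y z _ hyz ih =>
    by_cases hyw : y = w
    · exact ⟨z, hyw ▸ hyz, .refl⟩
    · obtain ⟨x, hwx, hxy⟩ := ih (Ne.symm hyw)
      exact ⟨x, hwx, .tail hxy (Finset.mem_filter.2 ⟨hyz, Ne.symm hne⟩)⟩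

end Reach

def reverseArcs (A : Finset (α × α)) : Finset (α × α) :=
  A.map (Equiv.prodComm α α).toEmbedding

section reverseArcs

variable {A B : Finset (α × α)} {u v : α}

@[simp]
theorem mem_reverseArcs : (u, v) ∈ reverseArcs A ↔ (v, u) ∈ A := by
  simp [reverseArcs, Finset.mem_map_equiv]

@[simp]
theorem card_reverseArcs : (reverseArcs A).card = A.card :=
  Finset.card_map _

theorem reverseArcs_subset_of_subset_reverseArcs (h : B ⊆ reverseArcs A) :
    reverseArcs B ⊆ A := fun ⟨_, _⟩ hab => mem_reverseArcs.1 (h (mem_reverseArcs.1 hab))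

theorem reach_reverseArcs_iff : Reach (reverseArcs A) u v ↔ Reach A v u := by
  unfold Reach
  simp only [mem_reverseArcs]
  exact Relation.reflTransGen_swap

end reverseArcs

/-- `(S', B')` grows `(S, B)` by heads and arcs of `A`, with at most one new arc per new vertex. -/
structure Extends [DecidableEq α] (A : Finset (α × α)) (S : Finset α) (B : Finset (α × α))
    (S' : Finset α) (B' : Finset (α × α)) : Prop where
  vertices_subset : S ⊆ S'
  subset_heads : S' ⊆ S ∪ A.image Prod.snd
  arcs_subset : B ⊆ B'
  subset_arcs : B' ⊆ B ∪ A
  card_add_le : B'.card + S.card ≤ B.card + S'.card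

namespace Extends

variable [DecidableEq α] {A B B' B'' : Finset (α × α)} {S S' S'' : Finset α}

theorem refl (A : Finset (α × α)) (S : Finset α) (B : Finset (α × α)) : Extends A S B S B :=
  ⟨subset_rfl, Finset.subset_union_left, subset_rfl, Finset.subset_union_left, le_rfl⟩

theorem trans (h : Extends A S B S' B') (h' : Extends A S' B' S'' B'') :
    Extends A S B S'' B'' where
  vertices_subset := h.vertices_subset.trans h'.vertices_subset
  subset_heads := h'.subset_heads.trans <| Finset.union_subset h.subset_heads
    Finset.subset_union_right
  arcs_subset := h.arcs_subset.trans h'.arcs_subset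
  subset_arcs := h'.subset_arcs.trans <| Finset.union_subset h.subset_arcs
    Finset.subset_union_right
  card_add_le := by have := h.card_add_le; have := h'.card_add_le; omega

theorem insert_arc {y v : α} (hyv : (y, v) ∈ A) (hv : v ∉ S) :
    Extends A S B (insert v S) (insert (y, v) B) where
  vertices_subset := Finset.subset_insert _ _
  subset_heads := Finset.insert_subset
    (Finset.mem_union_right _ (Finset.mem_image_of_mem _ hyv)) Finset.subset_union_left
  arcs_subset := Finset.subset_insert _ _
  subset_arcs := Finset.insert_subset (Finset.mem_union_right _ hyv) Finset.subset_union_left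
  card_add_le := by
    rw [Finset.card_insert_of_notMem hv]
    have := Finset.card_insert_le (y, v) B
    omega

theorem subset_of_forall_head_mem {V : Finset α} (h : Extends A S B S' B') (hSV : S ⊆ V)
    (hAV : ∀ a ∈ A, a.2 ∈ V) : S' ⊆ V :=
  h.subset_heads.trans <| Finset.union_subset hSV fun v hv => by
    obtain ⟨a, ha, rfl⟩ := Finset.mem_image.1 hv
    exact hAV a ha

end Extends

section Branching

variable [DecidableEq α] {A B : Finset (α × α)} {S : Finset α} {r : α}

theorem exists_extends_of_reach (hB : ∀ s ∈ S, Reach B r s) {s v : α} (hs : s ∈ S)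
    (hsv : Reach A s v) : ∃ S' B', Extends A S B S' B' ∧ v ∈ S' ∧ ∀ x ∈ S', Reach B' r x := by
  induction hsv with
  | refl => exact ⟨S, B, .refl A S B, hs, hB⟩
  | @tail y v _ hyv ih =>
    obtain ⟨S', B', hext, hy, hB'⟩ := ih
    by_cases hv : v ∈ S'
    · exact ⟨S', B', hext, hv, hB'⟩
    refine ⟨insert v S', insert (y, v) B', hext.trans (.insert_arc hyv hv),
      Finset.mem_insert_self _ _, fun x hx => ?_⟩
    rcases Finset.mem_insert.1 hx with rfl | hx
    · exact .tail ((hB' y hy).mono (Finset.subset_insert _ _)) (Finset.mem_insert_self _ _)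
    · exact (hB' x hx).mono (Finset.subset_insert _ _)

theorem exists_extends_of_forall_reach (hB : ∀ s ∈ S, Reach B r s) (hr : r ∈ S)
    (W : Finset α) (hW : ∀ v ∈ W, Reach A r v) :
    ∃ S' B', Extends A S B S' B' ∧ W ⊆ S' ∧ ∀ x ∈ S', Reach B' r x := by
  induction W using Finset.induction_on with
  | empty => exact ⟨S, B, .refl A S B, Finset.empty_subset _, hB⟩
  | @insert v W _ ih =>
    obtain ⟨S', B', hext, hWS', hB'⟩ := ih fun x hx => hW x (Finset.mem_insert_of_mem hx)
    obtain ⟨S'', B'', hext', hv, hB''⟩ :=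
      exists_extends_of_reach hB' (hext.vertices_subset hr) (hW v (Finset.mem_insert_self _ _))
    exact ⟨S'', B'', hext.trans hext', Finset.insert_subset hv
      (hWS'.trans hext'.vertices_subset), hB''⟩

theorem exists_branching {V : Finset α} (hSV : S ⊆ V) (hAV : ∀ a ∈ A, a.2 ∈ V)
    (hB : ∀ s ∈ S, Reach B r s) (hr : r ∈ S) (hV : ∀ v ∈ V, Reach A r v) :
    ∃ T, B ⊆ T ∧ T ⊆ B ∪ A ∧ (∀ v ∈ V, Reach T r v) ∧ T.card + S.card ≤ B.card + V.card := by
  obtain ⟨S', T, hext, hVS', hT⟩ := exists_extends_of_forall_reach hB hr V hV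
  obtain rfl : S' = V := (hext.subset_of_forall_head_mem hSV hAV).antisymm hVS'
  exact ⟨T, hext.arcs_subset, hext.subset_arcs, hT, hext.card_add_le⟩

end Branching

section MSC

variable [DecidableEq α] {V : Finset α} {A B : Finset (α × α)} {u w x : α}

theorem MSC.eq_of_subset (h : MSC V A) (hBA : B ⊆ A) (hB : StrongConn V B) : A = B := by
  by_contra hne
  obtain ⟨a, haA, haB⟩ := Finset.exists_of_ssubset (lt_of_le_of_ne hBA (Ne.symm hne))
  exact h.2 a haA fun u hu v hv =>
    (hB u hu v hv).mono fun e he => Finset.mem_erase.2 ⟨fun hea => haB (hea ▸ he), hBA he⟩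

theorem MSC.not_reach_erase (h : MSC V A) {a : α × α} (ha : a ∈ A) :
    ¬ Reach (A.erase a) a.1 a.2 := fun hreach =>
  h.2 a ha fun u hu v hv => (h.1 u hu v hv).of_forall_arc fun e he => by
    by_cases hea : e = a
    · exact hea ▸ hreach
    · exact .single (Finset.mem_erase.2 ⟨hea, he⟩)

theorem exists_out_branching_through_arc (hg : GoodDigraph V A) (hsc : StrongConn V A)
    (huw : (u, w) ∈ A) (hxV : x ∈ V) (hxw : x ≠ w) (hxu : Reach (A.filter (·.2 ≠ w)) x u) :
    ∃ T ⊆ A, (u, w) ∈ T ∧ (∀ v ∈ V, Reach T x v) ∧ T.card + 1 ≤ V.card := by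
  obtain ⟨S, B, hext, hu, hB⟩ := exists_extends_of_reach (r := x) (B := ∅)
    (fun s hs => by rw [Finset.mem_singleton.1 hs]; exact .refl)
    (Finset.mem_singleton_self x) hxu
  have hwS : w ∉ S := fun hw => by
    rcases Finset.mem_union.1 (hext.subset_heads hw) with hw | hw
    · exact hxw (Finset.mem_singleton.1 hw).symm
    · obtain ⟨a, ha, rfl⟩ := Finset.mem_image.1 hw
      exact (Finset.mem_filter.1 ha).2 rfl
  have hBA : B ⊆ A := hext.subset_arcs.trans <| by simp
  have hB' : ∀ s ∈ insert w S, Reach (insert (u, w) B) x s := by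
    intro s hs
    rcases Finset.mem_insert.1 hs with rfl | hs
    · exact .tail ((hB u hu).mono (Finset.subset_insert _ _)) (Finset.mem_insert_self _ _)
    · exact (hB s hs).mono (Finset.subset_insert _ _)
  have hSV : insert w S ⊆ V := Finset.insert_subset (hg.2 _ huw).2.1 <|
    hext.subset_of_forall_head_mem (by simpa using hxV) fun a ha =>
      (hg.2 a (Finset.mem_filter.1 ha).1).2.1
  obtain ⟨T, hBT, hTA, hT, hcard⟩ := exists_branching hSV (fun a ha => (hg.2 a ha).2.1) hB'
    (Finset.mem_insert_of_mem (hext.vertices_subset (Finset.mem_singleton_self x)))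
    (hsc x hxV)
  refine ⟨T, hTA.trans (Finset.union_subset (Finset.insert_subset huw hBA) subset_rfl),
    hBT (Finset.mem_insert_self _ _), hT, ?_⟩
  have hBS := hext.card_add_le
  rw [Finset.card_empty, Finset.card_singleton] at hBS
  rw [Finset.card_insert_of_notMem hwS] at hcard
  have := Finset.card_insert_le (u, w) B
  omega

theorem exists_in_branching_through_arc (hg : GoodDigraph V A) (hsc : StrongConn V A)
    (huw : (u, w) ∈ A) (hwx : (w, x) ∈ A) (hux : u ≠ x) :
    ∃ Q ⊆ A, (u, w) ∈ Q ∧ (∀ v ∈ V, Reach Q v x) ∧ Q.card + 1 ≤ V.card := by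
  obtain ⟨hu, hw, hwu⟩ := hg.2 _ huw
  obtain ⟨-, hx, hwx_ne⟩ := hg.2 _ hwx
  have hB : ∀ s ∈ ({x, w, u} : Finset α), Reach {(x, w), (w, u)} x s := by
    simp only [Finset.mem_insert, Finset.mem_singleton, forall_eq_or_imp, forall_eq]
    have hxw : Reach {(x, w), (w, u)} x w := .single (by simp)
    exact ⟨.refl, hxw, hxw.tail (by simp)⟩
  obtain ⟨Q, hBQ, hQA, hQ, hcard⟩ := exists_branching (A := reverseArcs A) (V := V)
    (by simp [Finset.insert_subset_iff, hu, hw, hx])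
    (fun ⟨_, _⟩ ha => (hg.2 _ (mem_reverseArcs.1 ha)).1) hB (by simp)
    fun v hv => reach_reverseArcs_iff.2 (hsc v hv x hx)
  refine ⟨reverseArcs Q, reverseArcs_subset_of_subset_reverseArcs <|
      hQA.trans (Finset.union_subset (by simp [Finset.insert_subset_iff, huw, hwx]) subset_rfl),
    mem_reverseArcs.2 (hBQ (by simp)), fun v hv => reach_reverseArcs_iff.2 (hQ v hv), ?_⟩
  rw [Finset.card_insert_of_notMem (by simp [hwx_ne.symm, hux.symm]),
    Finset.card_pair hwu.symm, Finset.card_pair (by simp [hwx_ne.symm])] at hcard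
  rw [card_reverseArcs]
  omega

theorem MSC.card_add_three_le_of_not_symm (hg : GoodDigraph V A) (h : MSC V A)
    (huw : (u, w) ∈ A) (hwu : (w, u) ∉ A) : A.card + 3 ≤ 2 * V.card := by
  obtain ⟨hu, hw, hne⟩ := hg.2 _ huw
  obtain ⟨x, hwx, hxu⟩ := (h.1 w hw u hu).exists_last_exit hne.symm
  obtain ⟨-, hxV, hwx_ne⟩ := hg.2 _ hwx
  have hux : u ≠ x := fun hux => hwu (hux ▸ hwx)
  obtain ⟨T, hTA, huwT, hT, hTcard⟩ :=
    exists_out_branching_through_arc hg h.1 huw hxV hwx_ne.symm hxu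
  obtain ⟨Q, hQA, huwQ, hQ, hQcard⟩ := exists_in_branching_through_arc hg h.1 huw hwx hux
  have hA : A = T ∪ Q := h.eq_of_subset (Finset.union_subset hTA hQA) fun a ha b hb =>
    Relation.ReflTransGen.trans ((hQ a ha).mono Finset.subset_union_right)
      ((hT b hb).mono Finset.subset_union_left)
  have hTQ : 1 ≤ (T ∩ Q).card := Finset.card_pos.2 ⟨_, Finset.mem_inter.2 ⟨huwT, huwQ⟩⟩
  have := Finset.card_union_add_card_inter T Q
  rw [hA]
  omega

theorem MSC.symm_of_card_eq (hg : GoodDigraph V A) (h : MSC V A)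
    (hcard : A.card = 2 * (V.card - 1)) : ∀ u w : α, (u, w) ∈ A → (w, u) ∈ A := by
  intro u w huw
  by_contra hwu
  have := h.card_add_three_le_of_not_symm hg huw hwu
  omega

end MSC

section UnderlyingGraph

variable {V : Finset α} {A : Finset (α × α)}

abbrev underlyingGraph (V : Finset α) (A : Finset (α × α)) : SimpleGraph {x // x ∈ V} :=
  SimpleGraph.fromRel fun a b => ((a : α), (b : α)) ∈ A

theorem mem_of_underlyingGraph_adj (hsym : ∀ u w : α, (u, w) ∈ A → (w, u) ∈ A)
    {a b : {x // x ∈ V}} (hab : (underlyingGraph V A).Adj a b) : ((a : α), (b : α)) ∈ A :=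
  ((SimpleGraph.fromRel_adj _ a b).1 hab).2.elim id (hsym _ _)

theorem underlyingGraph_adj_of_mem (hg : GoodDigraph V A) {a b : {x // x ∈ V}}
    (hab : ((a : α), (b : α)) ∈ A) : (underlyingGraph V A).Adj a b :=
  (SimpleGraph.fromRel_adj _ a b).2 ⟨fun h => (hg.2 _ hab).2.2 (congrArg Subtype.val h), .inl hab⟩

theorem Reach.of_reachable {G : SimpleGraph {x // x ∈ V}}
    (hG : ∀ a b, G.Adj a b → ((a : α), (b : α)) ∈ A) {a b : {x // x ∈ V}} (h : G.Reachable a b) :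
    Reach A a b :=
  Relation.ReflTransGen.lift Subtype.val hG _ _ ((SimpleGraph.reachable_iff_reflTransGen a b).1 h)

theorem StrongConn.underlyingGraph_connected (hg : GoodDigraph V A) (hsc : StrongConn V A) :
    (underlyingGraph V A).Connected := by
  have key : ∀ u v, Reach A u v → ∀ (hu : u ∈ V) (hv : v ∈ V),
      (underlyingGraph V A).Reachable ⟨u, hu⟩ ⟨v, hv⟩ := by
    intro u v huv
    induction huv with
    | refl => exact fun _ _ => .rfl
    | @tail y z _ hyz ih =>
      exact fun hu hz => (ih hu (hg.2 _ hyz).1).trans (underlyingGraph_adj_of_mem hg hyz).reachable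
  obtain ⟨r, hr⟩ := hg.1
  exact (SimpleGraph.connected_iff _).2
    ⟨fun a b => key a b (hsc a a.2 b b.2) a.2 b.2, ⟨⟨r, hr⟩⟩⟩

theorem MSC.underlyingGraph_isAcyclic [DecidableEq α] (h : MSC V A)
    (hsym : ∀ u w : α, (u, w) ∈ A → (w, u) ∈ A) : (underlyingGraph V A).IsAcyclic := by
  refine SimpleGraph.isAcyclic_iff_forall_adj_isBridge.2 fun a b hab hreach =>
    h.not_reach_erase (mem_of_underlyingGraph_adj hsym hab) (Reach.of_reachable ?_ hreach)
  intro c d hcd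
  rw [SimpleGraph.deleteEdges_adj, Set.mem_singleton_iff] at hcd
  refine Finset.mem_erase.2 ⟨fun hcdab => hcd.2 ?_, mem_of_underlyingGraph_adj hsym hcd.1⟩
  rw [Subtype.ext (congrArg Prod.fst hcdab), Subtype.ext (congrArg Prod.snd hcdab)]

theorem card_eq_two_mul_card_edgeFinset (hg : GoodDigraph V A)
    (hsym : ∀ u w : α, (u, w) ∈ A → (w, u) ∈ A) [DecidableRel (underlyingGraph V A).Adj] :
    A.card = 2 * (underlyingGraph V A).edgeFinset.card := by
  rw [← SimpleGraph.dart_card_eq_twice_card_edges, ← Finset.card_univ]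
  symm
  refine Finset.card_bij (fun d _ => ((d.fst : α), (d.snd : α)))
    (fun d _ => mem_of_underlyingGraph_adj hsym d.adj) ?_ ?_
  · intro d _ d' _ hdd'
    exact SimpleGraph.Dart.ext _ _ (Prod.ext (Subtype.ext (congrArg Prod.fst hdd'))
      (Subtype.ext (congrArg Prod.snd hdd')))
  · rintro ⟨u, w⟩ huw
    obtain ⟨hu, hw, -⟩ := hg.2 _ huw
    exact ⟨⟨(⟨u, hu⟩, ⟨w, hw⟩), underlyingGraph_adj_of_mem hg huw⟩, Finset.mem_univ _, rfl⟩

end UnderlyingGraph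

end Development

theorem stmt_5_general {α : Type*} [DecidableEq α] (V : Finset α) (A : Finset (α × α))
    (hg : GoodDigraph V A) (h : MSC V A) :
    A.card = 2 * (V.card - 1) ↔ IsDirTree V A := by
  constructor
  · intro hcard
    have hsym := h.symm_of_card_eq hg hcard
    exact ⟨hsym, h.1.underlyingGraph_connected hg, h.underlyingGraph_isAcyclic hsym⟩
  · rintro ⟨hsym, htree⟩
    replace htree : (underlyingGraph V A).IsTree := htree
    have htree_card := htree.card_edgeFinset
    rw [Fintype.card_coe] at htree_card
    rw [card_eq_two_mul_card_edgeFinset hg hsym]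
    omega

/-- an MSC digraph of order `n ≥ 2` has exactly `2(n-1)` arcs iff
it is a directed tree. -/
theorem stmt_5 {α : Type*} [DecidableEq α] (V : Finset α) (A : Finset (α × α))
    (hg : GoodDigraph V A) (hn : 2 ≤ V.card) (h : MSC V A) :
    A.card = 2 * (V.card - 1) ↔ IsDirTree V A :=
  stmt_5_general V A hg h
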